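/- Fix an integer k ≥ 0, n ≥ 1, and λ, μ ∈ ℝ such that 2j + n(2λ−1) ≠ 0 and 2j + n(2μ−1) ≠ 0 for every integer 1 ≤ j ≤ k. Suppose c and c′ are two real-valued families (c_{r,s,t}) indexed by triples of nonnegative integers with r+s+t = k (extended by zero to all other triples), each satisfying, for all r, s, t ≥ 0 with r+s+t = k−1: (i) 2(r+1)(2(r+1) + n(2λ−1))·c_{r+1,s,t} − (s+2)(s+1)·c_{r,s+2,t−1} + 2(s+1)(s + 2t + nμ)·c_{r,s+1,t} = 0, and (ii) 2(t+1)(2(t+1) + n(2μ−1))·c_{r,s,t+1} − (s+2)(s+1)·c_{r−1,s+2,t} + 2(s+1)(s + 2r + nλ)·c_{r,s+1,t} = 0. If c_{0,k,0} = c′_{0,k,0}, then c = c′. In particular, the solution space of the system (i)–(ii) is at most one-dimensional. -/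
import Mathlib


/-- A family `c : ℤ → ℤ → ℤ → ℝ` is a solution of the recurrence system (i)–(ii) of degree
`k` (with parameters `n, λ, μ`) if it vanishes outside `{r,s,t ≥ 0, r+s+t = k}` and
satisfies, for all `r, s, t ≥ 0` with `r+s+t = k−1`:
(i)  `2(r+1)(2(r+1) + n(2λ−1))·c_{r+1,s,t} − (s+2)(s+1)·c_{r,s+2,t−1}
      + 2(s+1)(s + 2t + nμ)·c_{r,s+1,t} = 0`;
(ii) `2(t+1)(2(t+1) + n(2μ−1))·c_{r,s,t+1} − (s+2)(s+1)·c_{r−1,s+2,t}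
      + 2(s+1)(s + 2r + nλ)·c_{r,s+1,t} = 0`. -/
def IsRecSol (k n : ℕ) (lam mu : ℝ) (c : ℤ → ℤ → ℤ → ℝ) : Prop :=
  (∀ r s t : ℤ, (r < 0 ∨ s < 0 ∨ t < 0 ∨ r + s + t ≠ (k : ℤ)) → c r s t = 0) ∧
  (∀ r s t : ℤ, 0 ≤ r → 0 ≤ s → 0 ≤ t → r + s + t = (k : ℤ) - 1 →
    2 * ((r : ℝ) + 1) * (2 * ((r : ℝ) + 1) + n * (2 * lam - 1)) * c (r + 1) s t
      - ((s : ℝ) + 2) * ((s : ℝ) + 1) * c r (s + 2) (t - 1)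
      + 2 * ((s : ℝ) + 1) * ((s : ℝ) + 2 * t + n * mu) * c r (s + 1) t = 0) ∧
  (∀ r s t : ℤ, 0 ≤ r → 0 ≤ s → 0 ≤ t → r + s + t = (k : ℤ) - 1 →
    2 * ((t : ℝ) + 1) * (2 * ((t : ℝ) + 1) + n * (2 * mu - 1)) * c r s (t + 1)
      - ((s : ℝ) + 2) * ((s : ℝ) + 1) * c (r - 1) (s + 2) t
      + 2 * ((s : ℝ) + 1) * ((s : ℝ) + 2 * r + n * lam) * c r (s + 1) t = 0)

/-- Uniqueness for the recurrence system (i)–(ii): if `2j + n(2λ−1) ≠ 0` and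
`2j + n(2μ−1) ≠ 0` for `1 ≤ j ≤ k`, then a solution is determined by its value
`c_{0,k,0}`; in particular the solution space is at most one-dimensional. -/
theorem recurrence_solution_unique (k n : ℕ) (hn : 1 ≤ n) (lam mu : ℝ)
    (hlam : ∀ j : ℕ, 1 ≤ j → j ≤ k → 2 * (j : ℝ) + n * (2 * lam - 1) ≠ 0)
    (hmu : ∀ j : ℕ, 1 ≤ j → j ≤ k → 2 * (j : ℝ) + n * (2 * mu - 1) ≠ 0)
    (c c' : ℤ → ℤ → ℤ → ℝ)
    (hc : IsRecSol k n lam mu c) (hc' : IsRecSol k n lam mu c')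
    (h0 : c 0 (k : ℤ) 0 = c' 0 (k : ℤ) 0) :
    c = c' := by
  obtain ⟨hv, hi, hii⟩ := hc
  obtain ⟨hv', hi', hii'⟩ := hc'
  set d : ℤ → ℤ → ℤ → ℝ := fun r s t => c r s t - c' r s t with hd
  have hdv : ∀ r s t : ℤ, (r < 0 ∨ s < 0 ∨ t < 0 ∨ r + s + t ≠ (k : ℤ)) → d r s t = 0 := by
    intro r s t h
    simp [hd, hv r s t h, hv' r s t h]
  -- base row t = 0
  have hbase : ∀ r : ℕ, ∀ s : ℤ, d (r : ℤ) s 0 = 0 := by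
    intro r
    induction r with
    | zero =>
      intro s
      by_cases hs : s = (k : ℤ)
      · simp [hd, hs, h0]
      · exact hdv 0 s 0 (by omega)
    | succ r ih =>
      intro s
      by_cases hs : 0 ≤ s ∧ (r : ℤ) + 1 + s + 0 = (k : ℤ)
      · obtain ⟨hs0, hsk⟩ := hs
        have hsum : (r : ℤ) + s + 0 = (k : ℤ) - 1 := by omega
        have h1 := hi (r : ℤ) s 0 (by positivity) hs0 le_rfl hsum
        have h1' := hi' (r : ℤ) s 0 (by positivity) hs0 le_rfl hsum
        have hz1 : d (r : ℤ) (s + 2) (0 - 1) = 0 := hdv _ _ _ (by omega)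
        have hz2 : d (r : ℤ) (s + 1) 0 = 0 := ih (s + 1)
        have hrec : 2 * ((r : ℝ) + 1) * (2 * ((r : ℝ) + 1) + n * (2 * lam - 1)) *
            d ((r : ℤ) + 1) s 0 = 0 := by
          simp only [hd] at hz1 hz2 ⊢
          push_cast at h1 h1' hz1 hz2 ⊢
          linear_combination h1 - h1' + ((s : ℝ) + 2) * ((s : ℝ) + 1) * hz1
            - 2 * ((s : ℝ) + 1) * ((s : ℝ) + (n : ℝ) * mu) * hz2
        have hco : 2 * ((r : ℝ) + 1) * (2 * ((r : ℝ) + 1) + n * (2 * lam - 1)) ≠ 0 := by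
          have hk : r + 1 ≤ k := by omega
          have := hlam (r + 1) (by omega) hk
          push_cast at this
          have h2 : (0 : ℝ) < 2 * ((r : ℝ) + 1) := by positivity
          intro h
          rcases mul_eq_zero.mp h with h | h
          · exact h2.ne' h
          · exact this (by linarith)
        have := (mul_eq_zero.mp hrec).resolve_left hco
        have hcast : ((r + 1 : ℕ) : ℤ) = (r : ℤ) + 1 := by push_cast; ring
        rw [hcast]; exact this
      · apply hdv
        omega
  -- induction on t
  have hkey : ∀ t : ℕ, ∀ r s : ℤ, d r s (t : ℤ) = 0 := by
    intro t
    induction t with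
    | zero =>
      intro r s
      by_cases hr : 0 ≤ r
      · obtain ⟨m, rfl⟩ := Int.eq_ofNat_of_zero_le hr
        exact hbase m s
      · exact hdv _ _ _ (by omega)
    | succ t ih =>
      intro r s
      by_cases hs : 0 ≤ r ∧ 0 ≤ s ∧ r + s + ((t : ℤ) + 1) = (k : ℤ)
      · obtain ⟨hr0, hs0, hsk⟩ := hs
        have hsum : r + s + (t : ℤ) = (k : ℤ) - 1 := by omega
        have h1 := hii r s (t : ℤ) hr0 hs0 (by positivity) hsum
        have h1' := hii' r s (t : ℤ) hr0 hs0 (by positivity) hsum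
        have hz1 : d (r - 1) (s + 2) (t : ℤ) = 0 := ih _ _
        have hz2 : d r (s + 1) (t : ℤ) = 0 := ih _ _
        have hrec : 2 * ((t : ℝ) + 1) * (2 * ((t : ℝ) + 1) + n * (2 * mu - 1)) *
            d r s ((t : ℤ) + 1) = 0 := by
          simp only [hd] at hz1 hz2 ⊢
          push_cast at h1 h1' hz1 hz2 ⊢
          linear_combination h1 - h1' + ((s : ℝ) + 2) * ((s : ℝ) + 1) * hz1
            - 2 * ((s : ℝ) + 1) * ((s : ℝ) + 2 * (r : ℝ) + (n : ℝ) * lam) * hz2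
        have hco : 2 * ((t : ℝ) + 1) * (2 * ((t : ℝ) + 1) + n * (2 * mu - 1)) ≠ 0 := by
          have hk : t + 1 ≤ k := by omega
          have := hmu (t + 1) (by omega) hk
          push_cast at this
          have h2 : (0 : ℝ) < 2 * ((t : ℝ) + 1) := by positivity
          intro h
          rcases mul_eq_zero.mp h with h | h
          · exact h2.ne' h
          · exact this (by linarith)
        have := (mul_eq_zero.mp hrec).resolve_left hco
        have hcast : ((t + 1 : ℕ) : ℤ) = (t : ℤ) + 1 := by push_cast; ring
        rw [hcast]; exact this
      · apply hdv
        push_cast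
        omega
  funext r s t
  have hdz : d r s t = 0 := by
    by_cases ht : 0 ≤ t
    · obtain ⟨m, rfl⟩ := Int.eq_ofNat_of_zero_le ht
      exact hkey m r s
    · exact hdv _ _ _ (by omega)
  simpa [hd, sub_eq_zero] using hdz
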